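/- Dropping a !-box preserves well-formedness: if G is a !-tensor expression then Drop_A(G) is a !-tensor expression, where Drop_A removes the box A but keeps its contents: Drop_A([G]_A) = G, Drop_A([e⟩_A) = e, Drop_A(⟨e]_A) = e, acting homomorphically otherwise. -/

import Mathlib

namespace Bang

/-- Edgeterms: ε, directed edges â (out) and ǎ (inn), clockwise `[e⟩_A` and
anticlockwise `⟨e]_A` !-box edge groups, and concatenation. -/
inductive EdgeTerm (E B : Type) : Type
  | eps : EdgeTerm E B
  | out (a : E) : EdgeTerm E B
  | inn (a : E) : EdgeTerm E B
  | cw (e : EdgeTerm E B) (A : B) : EdgeTerm E B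
  | acw (e : EdgeTerm E B) (A : B) : EdgeTerm E B
  | cat (e f : EdgeTerm E B) : EdgeTerm E B

variable {E B S : Type}

/-- The smallest congruence on edgeterms generated by the unit laws for ε,
associativity of concatenation, and `[ε⟩_A ≡ ε ≡ ⟨ε]_A`. -/
inductive ETEquiv : EdgeTerm E B → EdgeTerm E B → Prop
  | refl (e) : ETEquiv e e
  | symm {e f} : ETEquiv e f → ETEquiv f e
  | trans {e f g} : ETEquiv e f → ETEquiv f g → ETEquiv e g
  | catCongr {e e' f f'} : ETEquiv e e' → ETEquiv f f' → ETEquiv (.cat e f) (.cat e' f')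
  | cwCongr (A) {e f} : ETEquiv e f → ETEquiv (.cw e A) (.cw f A)
  | acwCongr (A) {e f} : ETEquiv e f → ETEquiv (.acw e A) (.acw f A)
  | epsCat (e) : ETEquiv (.cat .eps e) e
  | catEps (e) : ETEquiv (.cat e .eps) e
  | assoc (e f g) : ETEquiv (.cat (.cat e f) g) (.cat e (.cat f g))
  | cwEps (A) : ETEquiv (.cw .eps A) .eps
  | acwEps (A) : ETEquiv (.acw .eps A) .eps

/-- !-pretensor expressions: the trivial tensor 1, identity tensors `1_{â b̌}`,
atomic tensors `φ_e`, !-box wrapping `[G]_A` and products `G H`. -/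
inductive Pretensor (E B S : Type) : Type
  | triv : Pretensor E B S
  | idt (a b : E) : Pretensor E B S
  | atom (φ : S) (e : EdgeTerm E B) : Pretensor E B S
  | box (G : Pretensor E B S) (A : B) : Pretensor E B S
  | prod (G H : Pretensor E B S) : Pretensor E B S

/-- Edge names occurring in an edgeterm. -/
def EdgeTerm.edgeSet : EdgeTerm E B → Set E
  | .eps => ∅
  | .out a => {a}
  | .inn a => {a}
  | .cw e _ => e.edgeSet
  | .acw e _ => e.edgeSet
  | .cat e f => e.edgeSet ∪ f.edgeSet

/-- !-box names occurring in an edgeterm. -/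
def EdgeTerm.boxSet : EdgeTerm E B → Set B
  | .eps => ∅
  | .out _ => ∅
  | .inn _ => ∅
  | .cw e A => e.boxSet ∪ {A}
  | .acw e A => e.boxSet ∪ {A}
  | .cat e f => e.boxSet ∪ f.boxSet

/-- Edges(G): edge names occurring in a !-pretensor expression. -/
def Pretensor.edgeSet : Pretensor E B S → Set E
  | .triv => ∅
  | .idt a b => {a, b}
  | .atom _ e => e.edgeSet
  | .box G _ => G.edgeSet
  | .prod G H => G.edgeSet ∪ H.edgeSet

/-- Boxes(G): !-box names occurring in a !-pretensor expression. -/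
def Pretensor.boxSet : Pretensor E B S → Set B
  | .triv => ∅
  | .idt _ _ => ∅
  | .atom _ e => e.boxSet
  | .box G A => G.boxSet ∪ {A}
  | .prod G H => G.boxSet ∪ H.boxSet

/-- Renaming of edge- and !-box names in an edgeterm. -/
def EdgeTerm.rename (fe : E → E) (fb : B → B) : EdgeTerm E B → EdgeTerm E B
  | .eps => .eps
  | .out a => .out (fe a)
  | .inn a => .inn (fe a)
  | .cw e A => .cw (e.rename fe fb) (fb A)
  | .acw e A => .acw (e.rename fe fb) (fb A)
  | .cat e f => .cat (e.rename fe fb) (f.rename fe fb)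

/-- Renaming of edge- and !-box names in a !-pretensor expression. -/
def Pretensor.rename (fe : E → E) (fb : B → B) : Pretensor E B S → Pretensor E B S
  | .triv => .triv
  | .idt a b => .idt (fe a) (fe b)
  | .atom φ e => .atom φ (e.rename fe fb)
  | .box G A => .box (G.rename fe fb) (fb A)
  | .prod G H => .prod (G.rename fe fb) (H.rename fe fb)

/-- A freshness function for `G`: a pair of bijections on edge names and on
!-box names whose images of Edges(G), Boxes(G) are disjoint from those sets. -/
def IsFresh (fe : E → E) (fb : B → B) (G : Pretensor E B S) : Prop :=
  Function.Bijective fe ∧ Function.Bijective fb ∧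
    G.edgeSet ∩ (fe '' G.edgeSet) = ∅ ∧ G.boxSet ∩ (fb '' G.boxSet) = ∅

section Ops

variable [DecidableEq E] [DecidableEq B]

/-- Occurrence of a directed edge (name, isOutput) in an edgeterm. -/
def EdgeTerm.occ : EdgeTerm E B → E × Bool → Bool
  | .eps, _ => false
  | .out a, d => decide (d = (a, true))
  | .inn a, d => decide (d = (a, false))
  | .cw e _, d => e.occ d
  | .acw e _, d => e.occ d
  | .cat e f, d => e.occ d || f.occ d

/-- The edge context of a directed edge within an edgeterm (inside-out). -/
def EdgeTerm.ectx : EdgeTerm E B → E × Bool → List B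
  | .eps, _ => []
  | .out _, _ => []
  | .inn _, _ => []
  | .cw e A, d => if e.occ d then e.ectx d ++ [A] else []
  | .acw e A, d => if e.occ d then e.ectx d ++ [A] else []
  | .cat e f, d => if e.occ d then e.ectx d else f.ectx d

/-- Occurrence of a directed edge in a !-pretensor expression. -/
def Pretensor.occ : Pretensor E B S → E × Bool → Bool
  | .triv, _ => false
  | .idt a b, d => decide (d = (a, true)) || decide (d = (b, false))
  | .atom _ e, d => e.occ d
  | .box G _, d => G.occ d
  | .prod G H, d => G.occ d || H.occ d

/-- ectx_G(a): the !-boxes containing `a` that occur as part of its edgeterm. -/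
def Pretensor.ectx : Pretensor E B S → E × Bool → List B
  | .triv, _ => []
  | .idt _ _, _ => []
  | .atom _ e, d => e.ectx d
  | .box G _, d => G.ectx d
  | .prod G H, d => if G.occ d then G.ectx d else H.ectx d

/-- nctx_G(a): the remaining !-boxes enclosing the node carrying `a` (inside-out). -/
def Pretensor.nctx : Pretensor E B S → E × Bool → List B
  | .triv, _ => []
  | .idt _ _, _ => []
  | .atom _ _, _ => []
  | .box G A, d => if G.occ d then G.nctx d ++ [A] else []
  | .prod G H, d => if G.occ d then G.nctx d else H.nctx d

/-- ctx_G(a) = ectx_G(a).nctx_G(a). -/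
def Pretensor.ctx (G : Pretensor E B S) (d : E × Bool) : List B := G.ectx d ++ G.nctx d

/-- Number of occurrences of a directed edge in an edgeterm. -/
def EdgeTerm.countD : EdgeTerm E B → E × Bool → Nat
  | .eps, _ => 0
  | .out a, d => if d = (a, true) then 1 else 0
  | .inn a, d => if d = (a, false) then 1 else 0
  | .cw e _, d => e.countD d
  | .acw e _, d => e.countD d
  | .cat e f, d => e.countD d + f.countD d

/-- Number of occurrences of a directed edge in a !-pretensor expression. -/
def Pretensor.countD : Pretensor E B S → E × Bool → Nat
  | .triv, _ => 0
  | .idt a b, d => (if d = (a, true) then 1 else 0) + (if d = (b, false) then 1 else 0)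
  | .atom _ e, d => e.countD d
  | .box G _, d => G.countD d
  | .prod G H, d => G.countD d + H.countD d

/-- Number of !-box wrappings `[...]_A` with the given name. -/
def Pretensor.countBox : Pretensor E B S → B → Nat
  | .triv, _ => 0
  | .idt _ _, _ => 0
  | .atom _ _, _ => 0
  | .box G A, C => (if A = C then 1 else 0) + G.countBox C
  | .prod G H, C => G.countBox C + H.countBox C

/-- The !-boxes of a !-pretensor expression that are not nested inside any other box. -/
def Pretensor.topBoxes : Pretensor E B S → Set B
  | .box _ A => {A}
  | .prod G H => G.topBoxes ∪ H.topBoxes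
  | _ => ∅

/-- The immediate nesting relation: `G.prec A C` means the !-box `A` is nested
directly inside the !-box `C` in `G` (no boxes between). -/
def Pretensor.prec : Pretensor E B S → B → B → Prop
  | .box H C, A, C' => (C' = C ∧ A ∈ H.topBoxes) ∨ H.prec A C'
  | .prod G H, A, C' => G.prec A C' ∨ H.prec A C'
  | _, _, _ => False

/-- Well-formedness of a !-pretensor expression: the freshness conditions F1, F2
and the context conditions C1, C2, C3.  A !-tensor expression is a well-formed
!-pretensor expression. -/
def Pretensor.WF (G : Pretensor E B S) : Prop :=
  -- F1: each directed edge occurs at most once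
  (∀ d : E × Bool, G.countD d ≤ 1) ∧
  -- F2: each !-box wrapping occurs at most once per name
  (∀ A : B, G.countBox A ≤ 1) ∧
  -- C1: edge context and node context are disjoint
  (∀ d : E × Bool, G.occ d = true → ∀ A ∈ G.ectx d, A ∉ G.nctx d) ∧
  -- C2: edge contexts consist of boxes of G, consecutively nested
  (∀ d : E × Bool, G.occ d = true →
    (∀ A ∈ G.ectx d, 1 ≤ G.countBox A) ∧ (G.ectx d).Chain' G.prec) ∧
  -- C3: bound pairs have compatible contexts
  (∀ a : E, G.occ (a, true) = true → G.occ (a, false) = true →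
    ∃ es bs : List B,
      es ++ G.nctx (a, false) = G.ectx (a, true) ++ bs ∧
      es ++ G.nctx (a, true) = G.ectx (a, false) ++ bs)

/-- Kill_A on edgeterms. -/
def EdgeTerm.kill (A : B) : EdgeTerm E B → EdgeTerm E B
  | .cw e C => if C = A then .eps else .cw (e.kill A) C
  | .acw e C => if C = A then .eps else .acw (e.kill A) C
  | .cat e f => .cat (e.kill A) (f.kill A)
  | e => e

/-- Kill_A on !-pretensor expressions: deletes the box `A` and its contents. -/
def Pretensor.kill (A : B) : Pretensor E B S → Pretensor E B S
  | .box G C => if C = A then .triv else .box (G.kill A) C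
  | .atom φ e => .atom φ (e.kill A)
  | .prod G H => .prod (G.kill A) (H.kill A)
  | G => G

/-- Drop_A on edgeterms. -/
def EdgeTerm.drop (A : B) : EdgeTerm E B → EdgeTerm E B
  | .cw e C => if C = A then e else .cw (e.drop A) C
  | .acw e C => if C = A then e else .acw (e.drop A) C
  | .cat e f => .cat (e.drop A) (f.drop A)
  | e => e

/-- Drop_A on !-pretensor expressions: removes the box `A` keeping its contents. -/
def Pretensor.drop (A : B) : Pretensor E B S → Pretensor E B S
  | .box G C => if C = A then G else .box (G.drop A) C
  | .atom φ e => .atom φ (e.drop A)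
  | .prod G H => .prod (G.drop A) (H.drop A)
  | G => G

/-- Exp_{A,fr} on edgeterms. -/
def EdgeTerm.exp (A : B) (fe : E → E) (fb : B → B) : EdgeTerm E B → EdgeTerm E B
  | .cw e C => if C = A then .cat (.cw e C) (e.rename fe fb) else .cw (e.exp A fe fb) C
  | .acw e C => if C = A then .cat (e.rename fe fb) (.acw e C) else .acw (e.exp A fe fb) C
  | .cat e f => .cat (e.exp A fe fb) (f.exp A fe fb)
  | e => e

/-- Exp_{A,fr} on !-pretensor expressions: appends a fresh copy of the contents. -/
def Pretensor.exp (A : B) (fe : E → E) (fb : B → B) : Pretensor E B S → Pretensor E B S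
  | .box G C => if C = A then .prod (.box G C) (G.rename fe fb) else .box (G.exp A fe fb) C
  | .atom φ e => .atom φ (e.exp A fe fb)
  | .prod G H => .prod (G.exp A fe fb) (H.exp A fe fb)
  | G => G

/-- Copy_{A,fr} on edgeterms. -/
def EdgeTerm.copy (A : B) (fe : E → E) (fb : B → B) : EdgeTerm E B → EdgeTerm E B
  | .cw e C =>
      if C = A then .cat (.cw e C) (.cw (e.rename fe fb) (fb A)) else .cw (e.copy A fe fb) C
  | .acw e C =>
      if C = A then .cat (.acw (e.rename fe fb) (fb A)) (.acw e C) else .acw (e.copy A fe fb) C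
  | .cat e f => .cat (e.copy A fe fb) (f.copy A fe fb)
  | e => e

/-- Copy_{A,fr} on !-pretensor expressions: appends a freshly-named boxed copy. -/
def Pretensor.copy (A : B) (fe : E → E) (fb : B → B) : Pretensor E B S → Pretensor E B S
  | .box G C =>
      if C = A then .prod (.box G C) (.box (G.rename fe fb) (fb A)) else .box (G.copy A fe fb) C
  | .atom φ e => .atom φ (e.copy A fe fb)
  | .prod G H => .prod (G.copy A fe fb) (H.copy A fe fb)
  | G => G

/-- A generic !-box operation: one of Kill, Drop, Exp, Copy. -/
inductive BoxOp : Type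
  | kill | drop | exp | copy

/-- Apply a !-box operation at box `A` with freshness data `fe`, `fb`
(ignored by Kill and Drop). -/
def BoxOp.apply : BoxOp → B → (E → E) → (B → B) → Pretensor E B S → Pretensor E B S
  | .kill, A, _, _, G => G.kill A
  | .drop, A, _, _, G => G.drop A
  | .exp, A, fe, fb, G => G.exp A fe fb
  | .copy, A, fe, fb, G => G.copy A fe fb

/-- Renaming of a single directed edge name (`o = true`: outputs, `o = false`: inputs). -/
def EdgeTerm.renameDir (o : Bool) (b c : E) : EdgeTerm E B → EdgeTerm E B
  | .eps => .eps
  | .out a => if o = true ∧ a = b then .out c else .out a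
  | .inn a => if o = false ∧ a = b then .inn c else .inn a
  | .cw e A => .cw (e.renameDir o b c) A
  | .acw e A => .acw (e.renameDir o b c) A
  | .cat e f => .cat (e.renameDir o b c) (f.renameDir o b c)

/-- Renaming of a single directed edge name in a !-pretensor expression. -/
def Pretensor.renameDir (o : Bool) (b c : E) : Pretensor E B S → Pretensor E B S
  | .triv => .triv
  | .idt a a' =>
      .idt (if o = true ∧ a = b then c else a) (if o = false ∧ a' = b then c else a')
  | .atom φ e => .atom φ (e.renameDir o b c)
  | .box G A => .box (G.renameDir o b c) A
  | .prod G H => .prod (G.renameDir o b c) (H.renameDir o b c)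

/-- !-tensor expression equivalence: generated by renaming of bound edge names,
associativity, commutativity and unit of the product, the identity-tensor
contraction laws, and edgeterm equivalences within atomic tensors. -/
inductive PTEquiv : Pretensor E B S → Pretensor E B S → Prop
  | refl (G) : PTEquiv G G
  | symm {G H} : PTEquiv G H → PTEquiv H G
  | trans {G H K} : PTEquiv G H → PTEquiv H K → PTEquiv G K
  | prodCongr {G G' H H'} : PTEquiv G G' → PTEquiv H H' → PTEquiv (.prod G H) (.prod G' H')
  | boxCongr (A) {G H} : PTEquiv G H → PTEquiv (.box G A) (.box H A)
  | atomCongr (φ) {e f} : ETEquiv e f → PTEquiv (.atom φ e) (.atom φ f)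
  | assoc (G H K) : PTEquiv (.prod (.prod G H) K) (.prod G (.prod H K))
  | comm (G H) : PTEquiv (.prod G H) (.prod H G)
  | unit (G) : PTEquiv (.prod G .triv) G
  -- G · 1_{b̂ ǎ} ≡ G[b̌ ↦ ǎ], for b̌ free in G
  | contractIn (G : Pretensor E B S) (b a : E) :
      G.occ (b, false) = true → G.occ (b, true) = false →
      PTEquiv (.prod G (.idt b a)) (G.renameDir false b a)
  -- H · 1_{â b̌} ≡ H[b̂ ↦ â], for b̂ free in H
  | contractOut (H : Pretensor E B S) (b a : E) :
      H.occ (b, true) = true → H.occ (b, false) = false →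
      PTEquiv (.prod H (.idt a b)) (H.renameDir true b a)
  -- renaming of a bound edge name to a fresh name
  | boundRename (G : Pretensor E B S) (b c : E) :
      G.occ (b, true) = true → G.occ (b, false) = true →
      G.occ (c, true) = false → G.occ (c, false) = false →
      PTEquiv G ((G.renameDir true b c).renameDir false b c)

/-- A directed edge is free in G if it occurs but its partner does not. -/
def Pretensor.freeD (G : Pretensor E B S) (d : E × Bool) : Prop :=
  G.occ d = true ∧ G.occ (d.1, !d.2) = false

/-- `(G, H)` is a !-tensor equation: compatible boundaries, i.e. identical free
edge names, identical !-boxes with the same nesting relation, and equal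
contexts on all free edges. -/
def TensorEq (G H : Pretensor E B S) : Prop :=
  (∀ d : E × Bool, G.freeD d ↔ H.freeD d) ∧
  G.boxSet = H.boxSet ∧
  (∀ A C : B, G.prec A C ↔ H.prec A C) ∧
  (∀ d : E × Bool, G.freeD d → G.ctx d = H.ctx d)

end Ops

end Bang

/-!
`Drop_A` deletes only the outermost occurrence of `A` from each edge context and node context.
In a !-tensor expression no context mentions `A` twice: node contexts by F2, edge contexts
because they are `≺`-chains and `X ≺ Y` puts `X` exactly one level deeper than `Y`. So on every
context `Drop_A` acts as `List.filter (· != A)`, which commutes with concatenation and therefore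
carries the equations of C3 over verbatim. A `≺`-chain `… X ≺ A ≺ Y …` stays a chain after
losing `A`, because `X ≺ Y` holds in `Drop_A(G)`.
-/

namespace List

variable {α : Type*} [DecidableEq α]

def eraseLastOcc (a : α) (l : List α) : List α := (l.reverse.erase a).reverse

@[simp] lemma eraseLastOcc_nil (a : α) : ([] : List α).eraseLastOcc a = [] := rfl

@[simp] lemma eraseLastOcc_append_singleton_self (a : α) (l : List α) :
    (l ++ [a]).eraseLastOcc a = l := by
  simp [eraseLastOcc]

lemma eraseLastOcc_append_singleton_of_ne {a b : α} (h : b ≠ a) (l : List α) :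
    (l ++ [b]).eraseLastOcc a = l.eraseLastOcc a ++ [b] := by
  simp [eraseLastOcc, erase_cons_tail (by simpa using h : ¬(b == a) = true)]

lemma filter_bne_of_not_mem {a : α} {l : List α} (h : a ∉ l) : l.filter (· != a) = l :=
  filter_eq_self.mpr fun _ hx => bne_iff_ne.mpr fun hxa => h (hxa ▸ hx)

lemma eraseLastOcc_eq_filter {a : α} {l : List α} (h : l.count a ≤ 1) :
    l.eraseLastOcc a = l.filter (· != a) := by
  by_cases ha : a ∈ l
  · obtain ⟨s, t, rfl⟩ := append_of_mem ha
    have hs : a ∉ s := fun h' => by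
      have := count_pos_iff.mpr h'; simp [count_append] at h; omega
    have ht : a ∉ t := fun h' => by
      have := count_pos_iff.mpr h'; simp [count_append] at h; omega
    simp [eraseLastOcc, erase_append_right _ (mt mem_reverse.mp ht), filter_append,
      filter_bne_of_not_mem hs, filter_bne_of_not_mem ht]
  · simp [eraseLastOcc, erase_of_not_mem (mt mem_reverse.mp ha), filter_bne_of_not_mem ha]

lemma IsChain.filter_bne {R R' : α → α → Prop} {a : α} {l : List α} (hl : l.IsChain R)
    (hnd : l.Nodup) (hR : ∀ x y, R x y → x ≠ a → y ≠ a → R' x y)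
    (hbridge : ∀ x y, R x a → R a y → x ≠ a → y ≠ a → R' x y) :
    (l.filter (· != a)).IsChain R' := by
  by_cases ha : a ∈ l
  · obtain ⟨s, t, rfl⟩ := append_of_mem ha
    obtain ⟨hs, ht⟩ : a ∉ s ∧ a ∉ t := by
      simpa using (nodup_cons.mp (nodup_middle.mp hnd)).1
    obtain ⟨hsa, hat⟩ := isChain_split.mp hl
    obtain ⟨hsR, -, hsa'⟩ := isChain_append.mp hsa
    rw [filter_append, filter_cons_of_neg (by simp), filter_bne_of_not_mem hs,
      filter_bne_of_not_mem ht]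
    refine isChain_append.mpr ⟨hsR.imp_of_mem_imp ?_, hat.tail.imp_of_mem_imp ?_, ?_⟩
    · exact fun x y hx hy hxy => hR x y hxy (ne_of_mem_of_not_mem hx hs)
        (ne_of_mem_of_not_mem hy hs)
    · exact fun x y hx hy hxy => hR x y hxy (ne_of_mem_of_not_mem hx ht)
        (ne_of_mem_of_not_mem hy ht)
    · intro x hx y hy
      exact hbridge x y (hsa' x hx a rfl) (hat.rel_head? hy)
        (ne_of_mem_of_not_mem (mem_of_mem_getLast? hx) hs)
        (ne_of_mem_of_not_mem (mem_of_mem_head? hy) ht)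
  · rw [filter_bne_of_not_mem ha]
    exact hl.imp_of_mem_imp fun x y hx hy hxy => hR x y hxy (ne_of_mem_of_not_mem hx ha)
      (ne_of_mem_of_not_mem hy ha)

end List

namespace Bang.Pretensor

variable {E B S : Type} [DecidableEq B]

lemma countBox_pos_of_mem_topBoxes : ∀ {G : Pretensor E B S} {X : B},
    X ∈ G.topBoxes → 0 < G.countBox X
  | .box G C, X, h => by
      simp only [topBoxes, Set.mem_singleton_iff] at h
      simp [countBox, h]
  | .prod G H, X, h => by
      simp only [topBoxes, Set.mem_union] at h
      rcases h with h | h <;> have := countBox_pos_of_mem_topBoxes h <;> simp only [countBox] <;>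
        omega

lemma countBox_pos_of_prec : ∀ {G : Pretensor E B S} {X Y : B}, G.prec X Y →
    0 < G.countBox X ∧ 0 < G.countBox Y
  | .box H C, X, Y, h => by
      simp only [prec] at h
      rcases h with ⟨rfl, hX⟩ | h
      · have := countBox_pos_of_mem_topBoxes hX
        simp only [countBox, if_true]; omega
      · have := countBox_pos_of_prec h
        simp only [countBox]; omega
  | .prod G H, X, Y, h => by
      simp only [prec] at h
      rcases h with h | h <;> have := countBox_pos_of_prec h <;> simp only [countBox] <;> omega

section UniqueBoxes

variable {G H : Pretensor E B S} {C : B}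

lemma countBox_le_one_of_box (h : ∀ X, (G.box C).countBox X ≤ 1) (X : B) :
    G.countBox X ≤ 1 := by
  have := h X; simp only [countBox] at this; omega

lemma countBox_le_one_of_prod_left (h : ∀ X, (G.prod H).countBox X ≤ 1) (X : B) :
    G.countBox X ≤ 1 := by
  have := h X; simp only [countBox] at this; omega

lemma countBox_le_one_of_prod_right (h : ∀ X, (G.prod H).countBox X ≤ 1) (X : B) :
    H.countBox X ≤ 1 := by
  have := h X; simp only [countBox] at this; omega

lemma countBox_eq_zero_of_box (h : (G.box C).countBox C ≤ 1) : G.countBox C = 0 := by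
  simp only [countBox, if_true] at h; omega

lemma countBox_eq_zero_of_prod_of_pos_right (h : (G.prod H).countBox C ≤ 1)
    (hH : 0 < H.countBox C) : G.countBox C = 0 := by
  simp only [countBox] at h; omega

end UniqueBoxes

/-- Nesting depth of the box `X`; junk unless exactly one box is named `X`. -/
def boxDepth : Pretensor E B S → B → ℕ
  | .box H C, X => if C = X then 0 else H.boxDepth X + 1
  | .prod G H, X => if 0 < G.countBox X then G.boxDepth X else H.boxDepth X
  | _, _ => 0

lemma boxDepth_of_mem_topBoxes : ∀ {G : Pretensor E B S}, (∀ C, G.countBox C ≤ 1) →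
    ∀ {X : B}, X ∈ G.topBoxes → G.boxDepth X = 0
  | .box G C, _, X, hX => by
      simp only [topBoxes, Set.mem_singleton_iff] at hX
      simp [boxDepth, hX]
  | .prod G H, hU, X, hX => by
      simp only [topBoxes, Set.mem_union] at hX
      rcases hX with hX | hX
      · simp [boxDepth, countBox_pos_of_mem_topBoxes hX,
          boxDepth_of_mem_topBoxes (countBox_le_one_of_prod_left hU) hX]
      · have hG : G.countBox X = 0 :=
          countBox_eq_zero_of_prod_of_pos_right (hU X) (countBox_pos_of_mem_topBoxes hX)
        simp [boxDepth, hG, boxDepth_of_mem_topBoxes (countBox_le_one_of_prod_right hU) hX]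

lemma boxDepth_of_prec : ∀ {G : Pretensor E B S}, (∀ C, G.countBox C ≤ 1) →
    ∀ {X Y : B}, G.prec X Y → G.boxDepth X = G.boxDepth Y + 1
  | .box H C, hU, X, Y, hp => by
      have hne : ∀ {Z}, 0 < H.countBox Z → C ≠ Z := fun {Z} hZ hCZ =>
        (countBox_eq_zero_of_box (hCZ ▸ hU Z)).not_gt hZ
      simp only [prec] at hp
      rcases hp with ⟨rfl, hX⟩ | hp
      · simp [boxDepth, hne (countBox_pos_of_mem_topBoxes hX),
          boxDepth_of_mem_topBoxes (countBox_le_one_of_box hU) hX]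
      · obtain ⟨hX, hY⟩ := countBox_pos_of_prec hp
        simp [boxDepth, hne hX, hne hY, boxDepth_of_prec (countBox_le_one_of_box hU) hp]
  | .prod G H, hU, X, Y, hp => by
      simp only [prec] at hp
      rcases hp with hp | hp
      · obtain ⟨hX, hY⟩ := countBox_pos_of_prec hp
        simp [boxDepth, hX, hY, boxDepth_of_prec (countBox_le_one_of_prod_left hU) hp]
      · obtain ⟨hX, hY⟩ := countBox_pos_of_prec hp
        simp [boxDepth, countBox_eq_zero_of_prod_of_pos_right (hU X) hX,
          countBox_eq_zero_of_prod_of_pos_right (hU Y) hY,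
          boxDepth_of_prec (countBox_le_one_of_prod_right hU) hp]

lemma nodup_of_isChain_prec {G : Pretensor E B S} (hU : ∀ C, G.countBox C ≤ 1) {l : List B}
    (hl : l.IsChain G.prec) : l.Nodup := by
  have hdepth : (l.map G.boxDepth).IsChain (· > ·) :=
    List.isChain_map _ |>.mpr <| hl.imp fun _ _ h => by rw [boxDepth_of_prec hU h]; omega
  exact List.Nodup.of_map G.boxDepth ((List.isChain_iff_pairwise.mp hdepth).imp ne_of_gt)

lemma countBox_drop_le (A : B) : ∀ (G : Pretensor E B S) (C : B),
    (G.drop A).countBox C ≤ G.countBox C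
  | .triv, _ | .idt _ _, _ | .atom _ _, _ => le_rfl
  | .box G C', C => by
      have := countBox_drop_le A G C
      simp only [drop]; split_ifs <;> simp only [countBox] <;> omega
  | .prod G H, C => by
      have := countBox_drop_le A G C
      have := countBox_drop_le A H C
      simp only [drop, countBox]; omega

lemma countBox_drop_of_ne {A C : B} (h : C ≠ A) : ∀ G : Pretensor E B S,
    (G.drop A).countBox C = G.countBox C
  | .triv | .idt _ _ | .atom _ _ => rfl
  | .box G C' => by
      by_cases hC' : C' = A
      · subst hC'; simp [drop, countBox, Ne.symm h]
      · simp [drop, countBox, hC', countBox_drop_of_ne h G]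
  | .prod G H => by simp only [drop, countBox, countBox_drop_of_ne h G, countBox_drop_of_ne h H]

lemma mem_topBoxes_drop_of_ne {A X : B} (hX : X ≠ A) : ∀ {G : Pretensor E B S},
    X ∈ G.topBoxes → X ∈ (G.drop A).topBoxes
  | .box G C, h => by
      simp only [topBoxes, Set.mem_singleton_iff] at h
      subst h
      simp [drop, topBoxes, hX]
  | .prod G H, h => by
      simp only [topBoxes, Set.mem_union] at h
      simp only [drop, topBoxes, Set.mem_union]
      exact h.imp (mem_topBoxes_drop_of_ne hX) (mem_topBoxes_drop_of_ne hX)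

lemma prec_drop {A : B} : ∀ {G : Pretensor E B S} {X Y : B},
    G.prec X Y → X ≠ A → Y ≠ A → (G.drop A).prec X Y
  | .box H C, X, Y, hp, hX, hY => by
      simp only [prec] at hp
      by_cases hC : C = A
      · subst hC
        simp only [drop, if_true]
        exact hp.resolve_left fun h => hY h.1
      · simp only [drop, hC, if_false, prec]
        exact hp.imp (And.imp_right (mem_topBoxes_drop_of_ne hX)) (prec_drop · hX hY)
  | .prod G H, X, Y, hp, hX, hY => by
      simp only [prec] at hp
      simp only [drop, prec]
      exact hp.imp (prec_drop · hX hY) (prec_drop · hX hY)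

lemma mem_topBoxes_drop_of_prec {A : B} : ∀ {G : Pretensor E B S},
    (∀ C, G.countBox C ≤ 1) → A ∈ G.topBoxes → ∀ {X : B}, G.prec X A →
    X ∈ (G.drop A).topBoxes
  | .box H C, hU, hA, X, hp => by
      simp only [topBoxes, Set.mem_singleton_iff] at hA
      subst hA
      simp only [prec] at hp
      simp only [drop, if_true]
      refine hp.elim And.right fun hp => ?_
      exact absurd (countBox_eq_zero_of_box (hU A)) (countBox_pos_of_prec hp).2.ne'
  | .prod G H, hU, hA, X, hp => by
      simp only [topBoxes, Set.mem_union] at hA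
      simp only [prec] at hp
      simp only [drop, topBoxes, Set.mem_union]
      rcases hA with hA | hA <;> rcases hp with hp | hp
      · exact .inl (mem_topBoxes_drop_of_prec (countBox_le_one_of_prod_left hU) hA hp)
      · exact absurd (countBox_eq_zero_of_prod_of_pos_right (hU A) (countBox_pos_of_prec hp).2)
          (countBox_pos_of_mem_topBoxes hA).ne'
      · exact absurd
          (countBox_eq_zero_of_prod_of_pos_right (hU A) (countBox_pos_of_mem_topBoxes hA))
          (countBox_pos_of_prec hp).2.ne'
      · exact .inr (mem_topBoxes_drop_of_prec (countBox_le_one_of_prod_right hU) hA hp)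

lemma prec_drop_of_prec_of_prec {A : B} : ∀ {G : Pretensor E B S},
    (∀ C, G.countBox C ≤ 1) → ∀ {X Y : B}, G.prec X A → G.prec A Y → (G.drop A).prec X Y
  | .box H C, hU, X, Y, hXA, hAY => by
      simp only [prec] at hXA hAY
      by_cases hC : C = A
      · subst hC
        have hpos : 0 < H.countBox C :=
          hAY.elim (countBox_pos_of_mem_topBoxes ·.2) (countBox_pos_of_prec · |>.1)
        exact absurd (countBox_eq_zero_of_box (hU C)) hpos.ne'
      · simp only [drop, hC, if_false, prec]
        have hXA := hXA.resolve_left fun h => hC h.1.symm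
        exact hAY.imp (And.imp_right fun hA => mem_topBoxes_drop_of_prec
          (countBox_le_one_of_box hU) hA hXA)
          (prec_drop_of_prec_of_prec (countBox_le_one_of_box hU) hXA ·)
  | .prod G H, hU, X, Y, hXA, hAY => by
      simp only [prec] at hXA hAY
      simp only [drop, prec]
      rcases hXA with hXA | hXA <;> rcases hAY with hAY | hAY
      · exact .inl (prec_drop_of_prec_of_prec (countBox_le_one_of_prod_left hU) hXA hAY)
      · exact absurd (countBox_eq_zero_of_prod_of_pos_right (hU A) (countBox_pos_of_prec hAY).1)
          (countBox_pos_of_prec hXA).2.ne'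
      · exact absurd (countBox_eq_zero_of_prod_of_pos_right (hU A) (countBox_pos_of_prec hXA).2)
          (countBox_pos_of_prec hAY).1.ne'
      · exact .inr (prec_drop_of_prec_of_prec (countBox_le_one_of_prod_right hU) hXA hAY)

end Bang.Pretensor

namespace Bang

variable {E B S : Type} [DecidableEq E]

lemma EdgeTerm.ectx_eq_nil_of_occ_eq_false : ∀ {e : EdgeTerm E B} {d : E × Bool},
    e.occ d = false → e.ectx d = []
  | .eps, _, _ | .out _, _, _ | .inn _, _, _ => rfl
  | .cw e C, d, h | .acw e C, d, h => by simp_all [occ, ectx]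
  | .cat e f, d, h => by
      simp only [occ, Bool.or_eq_false_iff] at h
      simp [ectx, h.1, ectx_eq_nil_of_occ_eq_false h.2]

lemma Pretensor.ectx_eq_nil_of_occ_eq_false : ∀ {G : Pretensor E B S} {d : E × Bool},
    G.occ d = false → G.ectx d = []
  | .triv, _, _ | .idt _ _, _, _ => rfl
  | .atom _ _, _, h => EdgeTerm.ectx_eq_nil_of_occ_eq_false h
  | .box G _, _, h => ectx_eq_nil_of_occ_eq_false (G := G) h
  | .prod G H, d, h => by
      simp only [occ, Bool.or_eq_false_iff] at h
      simp [ectx, h.1, ectx_eq_nil_of_occ_eq_false h.2]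

lemma Pretensor.nctx_eq_nil_of_occ_eq_false : ∀ {G : Pretensor E B S} {d : E × Bool},
    G.occ d = false → G.nctx d = []
  | .triv, _, _ | .idt _ _, _, _ | .atom _ _, _, _ => rfl
  | .box G _, _, h => by simp_all [occ, nctx]
  | .prod G H, d, h => by
      simp only [occ, Bool.or_eq_false_iff] at h
      simp [nctx, h.1, nctx_eq_nil_of_occ_eq_false h.2]

variable [DecidableEq B]

namespace EdgeTerm

lemma occ_drop (A : B) : ∀ (e : EdgeTerm E B) (d : E × Bool), (e.drop A).occ d = e.occ d
  | .eps, _ | .out _, _ | .inn _, _ => rfl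
  | .cw e C, d | .acw e C, d => by
      simp only [drop]; split_ifs <;> simp [occ, occ_drop A e d]
  | .cat e f, d => by simp only [drop, occ, occ_drop A e d, occ_drop A f d]

lemma countD_drop (A : B) : ∀ (e : EdgeTerm E B) (d : E × Bool),
    (e.drop A).countD d = e.countD d
  | .eps, _ | .out _, _ | .inn _, _ => rfl
  | .cw e C, d | .acw e C, d => by
      simp only [drop]; split_ifs <;> simp [countD, countD_drop A e d]
  | .cat e f, d => by simp only [drop, countD, countD_drop A e d, countD_drop A f d]

lemma ectx_drop (A : B) : ∀ (e : EdgeTerm E B) (d : E × Bool),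
    (e.drop A).ectx d = (e.ectx d).eraseLastOcc A
  | .eps, _ | .out _, _ | .inn _, _ => rfl
  | .cw e C, d | .acw e C, d => by
      by_cases hC : C = A
      · cases ho : e.occ d <;> simp [drop, ectx, ho, hC, ectx_eq_nil_of_occ_eq_false]
      · cases ho : e.occ d <;> simp [drop, ectx, ho, hC, occ_drop, ectx_drop A e d,
          List.eraseLastOcc_append_singleton_of_ne hC]
  | .cat e f, d => by
      simp only [drop, ectx, occ_drop, ectx_drop A e d, ectx_drop A f d]
      split_ifs <;> rfl

end EdgeTerm

namespace Pretensor

lemma occ_drop (A : B) : ∀ (G : Pretensor E B S) (d : E × Bool), (G.drop A).occ d = G.occ d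
  | .triv, _ | .idt _ _, _ => rfl
  | .atom _ e, d => EdgeTerm.occ_drop A e d
  | .box G C, d => by simp only [drop]; split_ifs <;> simp [occ, occ_drop A G d]
  | .prod G H, d => by simp only [drop, occ, occ_drop A G d, occ_drop A H d]

lemma countD_drop (A : B) : ∀ (G : Pretensor E B S) (d : E × Bool),
    (G.drop A).countD d = G.countD d
  | .triv, _ | .idt _ _, _ => rfl
  | .atom _ e, d => EdgeTerm.countD_drop A e d
  | .box G C, d => by simp only [drop]; split_ifs <;> simp [countD, countD_drop A G d]
  | .prod G H, d => by simp only [drop, countD, countD_drop A G d, countD_drop A H d]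

lemma nctx_drop (A : B) : ∀ (G : Pretensor E B S) (d : E × Bool),
    (G.drop A).nctx d = (G.nctx d).eraseLastOcc A
  | .triv, _ | .idt _ _, _ | .atom _ _, _ => rfl
  | .box G C, d => by
      by_cases hC : C = A
      · cases ho : G.occ d <;> simp [drop, nctx, ho, hC, nctx_eq_nil_of_occ_eq_false]
      · cases ho : G.occ d <;> simp [drop, nctx, ho, hC, occ_drop, nctx_drop A G d,
          List.eraseLastOcc_append_singleton_of_ne hC]
  | .prod G H, d => by
      simp only [drop, nctx, occ_drop, nctx_drop A G d, nctx_drop A H d]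
      split_ifs <;> rfl

lemma ectx_drop (A : B) : ∀ (G : Pretensor E B S) (d : E × Bool),
    (G.drop A).ectx d = if A ∈ G.nctx d then G.ectx d else (G.ectx d).eraseLastOcc A
  | .triv, _ | .idt _ _, _ => rfl
  | .atom _ e, d => by simp [drop, ectx, nctx, EdgeTerm.ectx_drop]
  | .box G C, d => by
      by_cases hC : C = A
      · cases ho : G.occ d <;> simp [drop, ectx, nctx, ho, hC, ectx_eq_nil_of_occ_eq_false]
      · cases ho : G.occ d <;> simp [drop, ectx, nctx, ho, hC, Ne.symm hC, ectx_drop A G d,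
          ectx_eq_nil_of_occ_eq_false, nctx_eq_nil_of_occ_eq_false]
  | .prod G H, d => by
      simp only [drop, ectx, nctx, occ_drop, ectx_drop A G d, ectx_drop A H d]
      split_ifs <;> rfl

lemma count_nctx_le_countBox (A : B) : ∀ (G : Pretensor E B S) (d : E × Bool),
    (G.nctx d).count A ≤ G.countBox A
  | .triv, _ | .idt _ _, _ | .atom _ _, _ => by simp [nctx, countBox]
  | .box G C, d => by
      have := count_nctx_le_countBox A G d
      cases ho : G.occ d <;> by_cases hC : C = A <;> simp [nctx, countBox, ho, hC] <;> omega
  | .prod G H, d => by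
      have := count_nctx_le_countBox A G d
      have := count_nctx_le_countBox A H d
      simp only [nctx, countBox]; split_ifs <;> omega

lemma nctx_drop_eq_filter {A : B} {G : Pretensor E B S} (hU : G.countBox A ≤ 1) (d : E × Bool) :
    (G.drop A).nctx d = (G.nctx d).filter (· != A) := by
  rw [nctx_drop, List.eraseLastOcc_eq_filter ((count_nctx_le_countBox A G d).trans hU)]

lemma ectx_drop_eq_filter {A : B} {G : Pretensor E B S} {d : E × Bool}
    (hA : A ∈ G.nctx d → A ∉ G.ectx d) (hnd : (G.ectx d).Nodup) :
    (G.drop A).ectx d = (G.ectx d).filter (· != A) := by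
  rw [ectx_drop]
  split_ifs with h
  · exact (List.filter_bne_of_not_mem (hA h)).symm
  · exact List.eraseLastOcc_eq_filter (List.nodup_iff_count_le_one.mp hnd A)

end Pretensor

end Bang

open Bang

/-- Drop_A preserves well-formedness of !-tensor expressions. -/
theorem drop_preserves_wf {E B S : Type} [DecidableEq E] [DecidableEq B]
    (G : Pretensor E B S) (hG : G.WF) (A : B) : (G.drop A).WF := by
  obtain ⟨hF1, hF2, hC1, hC2, hC3⟩ := hG
  have hnodup d (hd : G.occ d) : (G.ectx d).Nodup :=
    Pretensor.nodup_of_isChain_prec hF2 (hC2 d hd).2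
  have hectx d (hd : G.occ d) : (G.drop A).ectx d = (G.ectx d).filter (· != A) :=
    Pretensor.ectx_drop_eq_filter (fun hn he => hC1 d hd A he hn) (hnodup d hd)
  have hnctx := Pretensor.nctx_drop_eq_filter (hF2 A)
  refine ⟨fun d => (Pretensor.countD_drop A G d).trans_le (hF1 d),
    fun C => (Pretensor.countBox_drop_le A G C).trans (hF2 C), ?_, ?_, ?_⟩ <;>
    simp only [Pretensor.occ_drop]
  · intro d hd C hCe hCn
    rw [hectx d hd, List.mem_filter] at hCe
    rw [hnctx, List.mem_filter] at hCn
    exact hC1 d hd C hCe.1 hCn.1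
  · intro d hd
    rw [hectx d hd]
    refine ⟨fun C hC => ?_, ?_⟩
    · obtain ⟨hC, hCA⟩ := List.mem_filter.mp hC
      rw [Pretensor.countBox_drop_of_ne (bne_iff_ne.mp hCA)]
      exact (hC2 d hd).1 C hC
    · exact (hC2 d hd).2.filter_bne (hnodup d hd) (fun _ _ h hX hY => Pretensor.prec_drop h hX hY)
        fun _ _ hXA hAY _ _ => Pretensor.prec_drop_of_prec_of_prec hF2 hXA hAY
  · intro a ht hf
    obtain ⟨es, bs, h1, h2⟩ := hC3 a ht hf
    refine ⟨es.filter (· != A), bs.filter (· != A), ?_, ?_⟩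
    · rw [hnctx, hectx _ ht, ← List.filter_append, h1, List.filter_append]
    · rw [hnctx, hectx _ hf, ← List.filter_append, h2, List.filter_append]
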